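/- arXiv:2602.02477 — 3 statements merged into one kernel-verified Lean document; each statement's English description precedes it below -/
import Mathlib

section
/- Let (Ω, 𝓕, μ) be a probability space, let S_1, …, S_m : Ω → {0,1} be mutually independent random variables, let g : {0,1}^m → [0,1] be nondecreasing with respect to the coordinatewise partial order on {0,1}^m, and let C : Ω → {0,1} satisfy μ({C = 1} ∩ {S = s}) = g(s) · μ({S = s}) for every s ∈ {0,1}^m, where S = (S_1, …, S_m). If μ(C = 1) > 0, then for every index i the conditional probability of subproblem correctness given a correct final answer is at least its unconditional probability: μ({S_i = 1} ∩ {C = 1}) / μ(C = 1) ≥ μ(S_i = 1). -/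
/-!
Split the outcomes `s ∈ {0,1}^m` according to the `i`-th coordinate and pair `s` having
`s i = 0` with the outcome obtained by flipping that coordinate to `1`. By independence the two
outcomes have probabilities `p₀ w` and `p₁ w` with the same weight `w` from the other
coordinates, and by monotonicity the success probability of the flipped outcome is the larger
one. Hence `p₁ · μ(C, S_i = 0) ≤ p₀ · μ(C, S_i = 1)`, which, since `p₀ + p₁ = 1`, is
`μ(S_i = 1) μ(C) ≤ μ(S_i = 1, C)`.
-/

open MeasureTheory ProbabilityTheory Finset
open scoped ENNReal

/-- Harris' inequality in one coordinate: under product weights `∏ j, q j (s j)` with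
`q i false + q i true = 1`, a monotone `f` satisfies `P(s i) · E[f] ≤ E[f; s i]`. -/
theorem mul_sum_le_sum_filter_of_monotone {ι : Type*} [Fintype ι] [DecidableEq ι]
    (q : ι → Bool → ℝ≥0∞) {i : ι} (hq : q i false + q i true = 1)
    {f : (ι → Bool) → ℝ≥0∞} (hf : Monotone f) :
    q i true * ∑ s, f s * ∏ j, q j (s j) ≤ ∑ s with s i = true, f s * ∏ j, q j (s j) := by
  set e := Equiv.funSplitAt i Bool
  set w : ({j // j ≠ i} → Bool) → ℝ≥0∞ := fun t => ∏ j : {j // j ≠ i}, q j (t j)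
  have hprod : ∀ b t, ∏ j, q j (e.symm (b, t) j) = q i b * w t := by
    intro b t
    rw [Fintype.prod_eq_mul_prod_subtype_ne _ i]
    congr 1
    · simp [e]
    · exact prod_congr rfl fun j _ => by simp [e, j.2]
  have hsplit : ∀ F : (ι → Bool) → ℝ≥0∞, ∑ s, F s = ∑ t, ∑ b, F (e.symm (b, t)) := by
    intro F
    rw [← e.symm.sum_comp, Fintype.sum_prod_type_right]
  rw [sum_filter, hsplit, hsplit, mul_sum]
  refine sum_le_sum fun t _ => ?_
  have hi : ∀ b, e.symm (b, t) i = b := by simp [e]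
  have hmono : f (e.symm (false, t)) ≤ f (e.symm (true, t)) := hf fun j => by
    by_cases hj : j = i <;> simp [e, hj]
  simp only [Fintype.sum_bool, hprod, hi, if_true, Bool.false_eq_true, if_false, add_zero]
  set F₀ := f (e.symm (false, t))
  set F₁ := f (e.symm (true, t))
  calc q i true * (F₁ * (q i true * w t) + F₀ * (q i false * w t))
      ≤ q i true * (F₁ * (q i true * w t) + F₁ * (q i false * w t)) := by gcongr
    _ = F₁ * (q i true * w t) * (q i false + q i true) := by ring
    _ = F₁ * (q i true * w t) := by rw [hq, mul_one]

theorem measure_preimage_inter_eq_sum {α β : Type*} [MeasurableSpace α] [MeasurableSpace β]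
    [MeasurableSingletonClass β] {μ : Measure α} {f : α → β} (hf : Measurable f)
    (T : Finset β) (A : Set α) :
    μ (f ⁻¹' T ∩ A) = ∑ b ∈ T, μ (f ⁻¹' {b} ∩ A) := by
  rw [← Measure.restrict_apply (hf T.measurableSet),
    ← sum_measure_preimage_singleton T fun b _ => hf (measurableSet_singleton b)]
  exact sum_congr rfl fun b _ => Measure.restrict_apply (hf (measurableSet_singleton b))

theorem ProbabilityTheory.iIndepFun.measure_preimage_singleton_eq_prod {Ω ι : Type*}
    [MeasurableSpace Ω] [Fintype ι] {β : ι → Type*} [∀ i, MeasurableSpace (β i)]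
    [∀ i, MeasurableSingletonClass (β i)] {μ : Measure Ω} {f : ∀ i, Ω → β i}
    (hf : iIndepFun f μ) (b : ∀ i, β i) :
    μ ((fun ω i => f i ω) ⁻¹' {b}) = ∏ i, μ (f i ⁻¹' {b i}) := by
  have hfiber : (fun ω i => f i ω) ⁻¹' {b} = ⋂ i, f i ⁻¹' {b i} := by
    ext ω
    simp [funext_iff]
  rw [hfiber]
  exact hf.meas_iInter fun i => ⟨{b i}, measurableSet_singleton _, rfl⟩

theorem stmt_1_general {Ω : Type*} [MeasurableSpace Ω] (μ : Measure Ω) [IsProbabilityMeasure μ]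
    (m : ℕ) (S : Fin m → Ω → Bool) (hSmeas : ∀ i, Measurable (S i))
    (hSindep : iIndepFun S μ)
    (g : (Fin m → Bool) → ℝ)
    (hgmono : Monotone g)
    (C : Ω → Bool)
    (hC : ∀ s : Fin m → Bool,
      μ ({ω | C ω = true} ∩ {ω | (fun j => S j ω) = s})
        = ENNReal.ofReal (g s) * μ {ω | (fun j => S j ω) = s})
    (hCpos : 0 < μ {ω | C ω = true})
    (i : Fin m) :
    (μ ({ω | S i ω = true} ∩ {ω | C ω = true})).toReal / (μ {ω | C ω = true}).toReal
      ≥ (μ {ω | S i ω = true}).toReal := by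
  set X : Ω → (Fin m → Bool) := fun ω j => S j ω
  set q : Fin m → Bool → ℝ≥0∞ := fun j b => μ (S j ⁻¹' {b})
  have hX : Measurable X := measurable_pi_lambda _ hSmeas
  have hq : q i false + q i true = 1 := by
    rw [add_comm, ← Fintype.sum_bool, sum_measure_preimage_singleton _
      fun b _ => hSmeas i (measurableSet_singleton b), coe_univ, Set.preimage_univ, measure_univ]
  have hfib : ∀ T : Finset (Fin m → Bool), μ (X ⁻¹' T ∩ {ω | C ω = true})
      = ∑ s ∈ T, ENNReal.ofReal (g s) * ∏ j, q j (s j) := fun T => by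
    rw [measure_preimage_inter_eq_sum hX]
    refine sum_congr rfl fun s _ => ?_
    rw [Set.inter_comm, ← hSindep.measure_preimage_singleton_eq_prod]
    exact hC s
  have hSi : X ⁻¹' ↑({s | s i = true} : Finset (Fin m → Bool)) = {ω | S i ω = true} := by
    ext ω
    simp [X]
  have key := mul_sum_le_sum_filter_of_monotone q hq (ENNReal.ofReal_mono.comp hgmono)
  simp only [Function.comp_apply, ← hfib, coe_univ, Set.preimage_univ, Set.univ_inter, hSi] at key
  rw [ge_iff_le, le_div_iff₀ (ENNReal.toReal_pos hCpos.ne' (measure_ne_top _ _)),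
    ← ENNReal.toReal_mul]
  exact ENNReal.toReal_mono (measure_ne_top _ _) key

/-- Conditional-probability form of Lemma 2.1:
`μ(S_i = 1 | C = 1) ≥ μ(S_i = 1)`. -/
theorem stmt_1 {Ω : Type*} [MeasurableSpace Ω] (μ : Measure Ω) [IsProbabilityMeasure μ]
    (m : ℕ) (S : Fin m → Ω → Bool) (hSmeas : ∀ i, Measurable (S i))
    (hSindep : iIndepFun S μ)
    (g : (Fin m → Bool) → ℝ) (hg0 : ∀ s, 0 ≤ g s) (hg1 : ∀ s, g s ≤ 1)
    (hgmono : Monotone g)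
    (C : Ω → Bool) (hCmeas : Measurable C)
    (hC : ∀ s : Fin m → Bool,
      μ ({ω | C ω = true} ∩ {ω | (fun j => S j ω) = s})
        = ENNReal.ofReal (g s) * μ {ω | (fun j => S j ω) = s})
    (hCpos : 0 < μ {ω | C ω = true})
    (i : Fin m) :
    (μ ({ω | S i ω = true} ∩ {ω | C ω = true})).toReal / (μ {ω | C ω = true}).toReal
      ≥ (μ {ω | S i ω = true}).toReal :=
  stmt_1_general μ m S hSmeas hSindep g hgmono C hC hCpos i
end

section
/- Let (Ω, 𝓕, μ) be a probability space, let S_1, …, S_m : Ω → {0,1} be mutually independent random variables, let g : {0,1}^m → [0,1] be nondecreasing with respect to the coordinatewise partial order on {0,1}^m, and let C : Ω → {0,1} satisfy μ({C = 1} ∩ {S = s}) = g(s) · μ({S = s}) for every s ∈ {0,1}^m, where S = (S_1, …, S_m). If μ(C = 0) > 0, then for every index i the conditional probability of subproblem correctness given an incorrect final answer is at most its unconditional probability: μ({S_i = 1} ∩ {C = 0}) / μ(C = 0) ≤ μ(S_i = 1). -/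
/-!
By independence, the law of `S` is the product of the laws of the `S j`, so splitting off the
coordinate `i` gives `μ(S_i = b, C = 0) = p_b φ(b)`, where `p_b = μ(S_i = b)` and `φ(b)` is the
expectation of `1 - g` with `s_i = b` fixed and the other coordinates drawn from their joint
law. Monotonicity of `g` makes `φ` antitone, and then
`p_1 φ(1) ≤ p_1 (p_1 φ(1) + p_0 φ(0)) = p_1 μ(C = 0)` because `p_0 + p_1 = 1`.
-/

open Finset

namespace Equiv

variable {ι : Type*} [DecidableEq ι] (i : ι)

theorem funSplitAt_symm_apply_self {β : Type*} (b : β) (t : {j // j ≠ i} → β) :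
    (funSplitAt i β).symm (b, t) i = b := by
  simp [funSplitAt, piSplitAt]

theorem funSplitAt_symm_apply_ne {β : Type*} (b : β) (t : {j // j ≠ i} → β) {j : ι} (hj : j ≠ i) :
    (funSplitAt i β).symm (b, t) j = t ⟨j, hj⟩ := by
  simp [funSplitAt, piSplitAt, hj]

theorem monotone_funSplitAt_symm {β : Type*} [Preorder β] (t : {j // j ≠ i} → β) :
    Monotone fun b => (funSplitAt i β).symm (b, t) := by
  intro a b hab j
  by_cases hj : j = i
  · subst hj; simpa [funSplitAt_symm_apply_self] using hab
  · simp [funSplitAt_symm_apply_ne i _ _ hj]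

end Equiv

section

variable {ι : Type*} [Fintype ι] [DecidableEq ι] (i : ι)

theorem Fintype.sum_filter_apply_eq {β M : Type*} [Fintype β] [DecidableEq β] [AddCommMonoid M]
    (b : β) (G : (ι → β) → M) :
    ∑ s with s i = b, G s = ∑ t : {j // j ≠ i} → β, G ((Equiv.funSplitAt i β).symm (b, t)) := by
  rw [sum_filter, ← (Equiv.funSplitAt i β).symm.sum_comp, Fintype.sum_prod_type]
  simp

theorem Fintype.prod_funSplitAt_symm {β M : Type*} [CommMonoid M] (p : ι → β → M) (b : β)
    (t : {j // j ≠ i} → β) :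
    ∏ j, p j ((Equiv.funSplitAt i β).symm (b, t) j) = p i b * ∏ j : {j // j ≠ i}, p j (t j) := by
  rw [Fintype.prod_eq_mul_prod_subtype_ne _ i, Equiv.funSplitAt_symm_apply_self]
  congr 1
  exact Fintype.prod_congr _ _ fun j => by rw [Equiv.funSplitAt_symm_apply_ne i _ _ j.2]

theorem Fintype.sum_filter_apply_true_mul_prod_le {h : (ι → Bool) → ℝ} (hh : Antitone h)
    (p : ι → Bool → ℝ) (hp : ∀ j b, 0 ≤ p j b) (hpi : p i true + p i false = 1) :
    ∑ s with s i = true, h s * ∏ j, p j (s j) ≤ p i true * ∑ s, h s * ∏ j, p j (s j) := by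
  set join : Bool → ({j // j ≠ i} → Bool) → ι → Bool :=
    fun b t => (Equiv.funSplitAt i Bool).symm (b, t)
  set φ : Bool → ℝ := fun b => ∑ t, h (join b t) * ∏ j : {j // j ≠ i}, p j (t j)
  have hfiber : ∀ b, ∑ s with s i = b, h s * ∏ j, p j (s j) = p i b * φ b := fun b => by
    rw [Fintype.sum_filter_apply_eq, mul_sum]
    refine Fintype.sum_congr _ _ fun t => ?_
    rw [Fintype.prod_funSplitAt_symm]
    ring
  have hφ : φ true ≤ φ false := sum_le_sum fun t _ =>
    mul_le_mul_of_nonneg_right (hh (Equiv.monotone_funSplitAt_symm i t (Bool.false_le true)))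
      (prod_nonneg fun j _ => hp j _)
  have htotal : ∑ s, h s * ∏ j, p j (s j) = p i false * φ false + p i true * φ true := by
    rw [← Finset.sum_fiberwise univ (fun s : ι → Bool => s i), Fintype.sum_bool, hfiber, hfiber,
      add_comm]
  rw [hfiber, htotal]
  calc p i true * φ true = p i true * (p i false * φ true + p i true * φ true) := by
        rw [← add_mul, add_comm, hpi, one_mul]
    _ ≤ p i true * (p i false * φ false + p i true * φ true) := by
        gcongr
        · exact hp i true
        · exact hp i false

end

namespace MeasureTheory

variable {Ω : Type*} [MeasurableSpace Ω] {μ : Measure Ω}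

theorem measureReal_preimage_finset_inter [IsFiniteMeasure μ] {β : Type*} [MeasurableSpace β]
    [MeasurableSingletonClass β] {f : Ω → β} (hf : Measurable f) (E : Finset β) (T : Set Ω) :
    μ.real (f ⁻¹' E ∩ T) = ∑ b ∈ E, μ.real (f ⁻¹' {b} ∩ T) := by
  rw [← measureReal_restrict_apply (hf E.measurableSet),
    ← sum_measureReal_preimage_singleton E fun b _ => hf (measurableSet_singleton b)]
  exact Finset.sum_congr rfl fun b _ => measureReal_restrict_apply (hf (measurableSet_singleton b))

theorem measureReal_inter_setOf_eq_false [IsFiniteMeasure μ] {C : Ω → Bool} (hC : Measurable C)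
    (A : Set Ω) :
    μ.real (A ∩ {ω | C ω = false}) = μ.real A - μ.real ({ω | C ω = true} ∩ A) := by
  have hdiff : A \ {ω | C ω = true} = A ∩ {ω | C ω = false} := by
    ext ω; simp
  rw [← measureReal_inter_add_sdiff (s := A) (t := {ω | C ω = true})
    (hC (measurableSet_singleton true)), hdiff, Set.inter_comm A {ω | C ω = true}]
  ring

theorem measureReal_eq_true_add_eq_false [IsProbabilityMeasure μ] {X : Ω → Bool}
    (hX : Measurable X) : μ.real {ω | X ω = true} + μ.real {ω | X ω = false} = 1 := by
  rw [← probReal_univ (μ := μ), ← Set.preimage_univ (f := X), ← Finset.coe_univ,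
    ← sum_measureReal_preimage_singleton _ fun b _ => hX (measurableSet_singleton b),
    Fintype.sum_bool]
  rfl

end MeasureTheory

namespace ProbabilityTheory

open MeasureTheory

theorem iIndepFun.measureReal_pi_preimage_singleton {Ω ι β : Type*} [MeasurableSpace Ω]
    {μ : Measure Ω} [Fintype ι] [MeasurableSpace β] [MeasurableSingletonClass β]
    {S : ι → Ω → β} (hS : iIndepFun S μ) (s : ι → β) :
    μ.real {ω | (fun j => S j ω) = s} = ∏ j, μ.real {ω | S j ω = s j} := by
  have hcell : {ω | (fun j => S j ω) = s} = ⋂ j, S j ⁻¹' {s j} := by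
    ext ω; simp [funext_iff]
  rw [hcell, measureReal_def, hS.meas_iInter fun j => ⟨{s j}, measurableSet_singleton _, rfl⟩,
    ENNReal.toReal_prod]
  rfl

end ProbabilityTheory

open MeasureTheory ProbabilityTheory

theorem stmt_9_general {Ω : Type*} [MeasurableSpace Ω] (μ : Measure Ω) [IsProbabilityMeasure μ]
    (m : ℕ) (S : Fin m → Ω → Bool) (hSmeas : ∀ i, Measurable (S i))
    (hSindep : iIndepFun S μ)
    (g : (Fin m → Bool) → ℝ) (hg0 : ∀ s, 0 ≤ g s)
    (hgmono : Monotone g)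
    (C : Ω → Bool) (hCmeas : Measurable C)
    (hC : ∀ s : Fin m → Bool,
      μ ({ω | C ω = true} ∩ {ω | (fun j => S j ω) = s})
        = ENNReal.ofReal (g s) * μ {ω | (fun j => S j ω) = s})
    (i : Fin m) :
    (μ ({ω | S i ω = true} ∩ {ω | C ω = false})).toReal / (μ {ω | C ω = false}).toReal
      ≤ (μ {ω | S i ω = true}).toReal := by
  set S' : Ω → Fin m → Bool := fun ω j => S j ω
  have hS' : Measurable S' := measurable_pi_lambda _ hSmeas
  set B := {ω | C ω = false}
  set p : Fin m → Bool → ℝ := fun j b => μ.real {ω | S j ω = b}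
  have hcell : ∀ s, μ.real (S' ⁻¹' {s} ∩ B) = (1 - g s) * ∏ j, p j (s j) := fun s => by
    have hpreimage : S' ⁻¹' {s} = {ω | (fun j => S j ω) = s} := rfl
    rw [hpreimage, measureReal_inter_setOf_eq_false hCmeas, measureReal_def, measureReal_def, hC,
      ENNReal.toReal_mul, ENNReal.toReal_ofReal (hg0 s), ← measureReal_def,
      ← hSindep.measureReal_pi_preimage_singleton]
    ring
  have hnum : μ.real ({ω | S i ω = true} ∩ B) = ∑ s with s i = true, μ.real (S' ⁻¹' {s} ∩ B) := by
    rw [← measureReal_preimage_finset_inter hS']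
    congr 2
    ext ω; simp [S']
  have hden : μ.real B = ∑ s, μ.real (S' ⁻¹' {s} ∩ B) := by
    rw [← measureReal_preimage_finset_inter hS', Finset.coe_univ, Set.preimage_univ,
      Set.univ_inter]
  refine div_le_of_le_mul₀ measureReal_nonneg measureReal_nonneg ?_
  change μ.real _ ≤ p i true * μ.real B
  simp only [hnum, hden, hcell]
  exact Fintype.sum_filter_apply_true_mul_prod_le i (fun _ _ hst => sub_le_sub_left (hgmono hst) 1)
    p (fun _ _ => measureReal_nonneg) (measureReal_eq_true_add_eq_false (hSmeas i))

/-- Converse direction of Lemma 2.1: conditioning on an incorrect final answer lowers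
the probability of subproblem correctness: `μ(S_i = 1 | C = 0) ≤ μ(S_i = 1)`. -/
theorem stmt_9 {Ω : Type*} [MeasurableSpace Ω] (μ : Measure Ω) [IsProbabilityMeasure μ]
    (m : ℕ) (S : Fin m → Ω → Bool) (hSmeas : ∀ i, Measurable (S i))
    (hSindep : iIndepFun S μ)
    (g : (Fin m → Bool) → ℝ) (hg0 : ∀ s, 0 ≤ g s) (hg1 : ∀ s, g s ≤ 1)
    (hgmono : Monotone g)
    (C : Ω → Bool) (hCmeas : Measurable C)
    (hC : ∀ s : Fin m → Bool,
      μ ({ω | C ω = true} ∩ {ω | (fun j => S j ω) = s})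
        = ENNReal.ofReal (g s) * μ {ω | (fun j => S j ω) = s})
    (hCpos : 0 < μ {ω | C ω = false})
    (i : Fin m) :
    (μ ({ω | S i ω = true} ∩ {ω | C ω = false})).toReal / (μ {ω | C ω = false}).toReal
      ≤ (μ {ω | S i ω = true}).toReal :=
  stmt_9_general μ m S hSmeas hSindep g hg0 hgmono C hCmeas hC i
end

section
/- Let (Ω, 𝓕, μ) be a probability space, let S_1, …, S_m : Ω → {0,1} be mutually independent random variables with 0 < μ(S_i = 1) < 1 for a fixed index i, let g : {0,1}^m → [0,1] be nondecreasing with respect to the coordinatewise partial order and strictly increasing in coordinate i (meaning g(s_{-i}; 1) > g(s_{-i}; 0) for every configuration s_{-i} ∈ {0,1}^{m−1} of the other coordinates), and let C : Ω → {0,1} satisfy μ({C = 1} ∩ {S = s}) = g(s) · μ({S = s}) for every s ∈ {0,1}^m, where S = (S_1, …, S_m). Then the covariance of S_i and C is strictly positive: E[S_i · C] − E[S_i] · E[C] > 0. -/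
/-! Split `S` into `S i` and the vector `Y` of the remaining coordinates, which is independent
of `S i`. Writing `p = P(S i = 1)` and conditioning on `(S i, Y)`,
`E[S_i C] - E[S_i] E[C] = p (1 - p) ∑ₜ P(Y = t) (g(1, t) - g(0, t))`.
Every term is nonnegative, and since the weights `P(Y = t)` sum to `1` one of them is positive,
so the sum is positive. -/

open MeasureTheory ProbabilityTheory

def IsCondSuccessProb {Ω α : Type*} [MeasurableSpace Ω] (μ : Measure Ω) (C : Ω → Bool)
    (Z : Ω → α) (g : α → ℝ) : Prop :=
  ∀ z, μ (C ⁻¹' {true} ∩ Z ⁻¹' {z}) = ENNReal.ofReal (g z) * μ (Z ⁻¹' {z})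

section

variable {Ω α β : Type*} [MeasurableSpace Ω] {μ : Measure Ω}

lemma integral_ite_one_zero {b : Ω → Bool} (hb : Measurable b) :
    ∫ ω, (if b ω then (1 : ℝ) else 0) ∂μ = μ.real (b ⁻¹' {true}) :=
  calc ∫ ω, (if b ω then (1 : ℝ) else 0) ∂μ = ∫ ω, (b ⁻¹' {true}).indicator 1 ω ∂μ := by
        congr 1 with ω
        by_cases h : b ω <;> simp [h]
    _ = _ := integral_indicator_one (hb (measurableSet_singleton true))

lemma integral_ite_one_zero_mul {a c : Ω → Bool} (ha : Measurable a) (hc : Measurable c) :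
    ∫ ω, (if a ω then (1 : ℝ) else 0) * (if c ω then (1 : ℝ) else 0) ∂μ
      = μ.real (a ⁻¹' {true} ∩ c ⁻¹' {true}) := by
  simp_rw [ite_zero_mul_ite_zero, one_mul, ← Bool.and_eq_true]
  rw [integral_ite_one_zero (b := fun ω => a ω && c ω) (by fun_prop)]
  congr 1 with ω
  simp

lemma measureReal_inter_preimage_finset [MeasurableSpace α] [MeasurableSingletonClass α]
    [IsFiniteMeasure μ] {Z : Ω → α} (hZ : Measurable Z) (B : Set Ω) (F : Finset α) :
    μ.real (B ∩ Z ⁻¹' F) = ∑ z ∈ F, μ.real (B ∩ Z ⁻¹' {z}) := by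
  have h := sum_measureReal_preimage_singleton (μ := μ.restrict B) F
    fun z _ => hZ (measurableSet_singleton z)
  simp only [measureReal_restrict_apply (hZ (measurableSet_singleton _)),
    measureReal_restrict_apply (hZ F.measurableSet)] at h
  simp only [Set.inter_comm B, h]

namespace IsCondSuccessProb

variable {C : Ω → Bool} {Z : Ω → α} {g : α → ℝ}

lemma comp_equiv (h : IsCondSuccessProb μ C Z g) (e : α ≃ β) :
    IsCondSuccessProb μ C (e ∘ Z) (g ∘ e.symm) := by
  intro z
  have hfib : (e ∘ Z) ⁻¹' {z} = Z ⁻¹' {e.symm z} := by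
    ext ω
    simp [Equiv.eq_symm_apply]
  rw [hfib]
  exact h _

lemma measureReal_inter_preimage_finset [MeasurableSpace α] [MeasurableSingletonClass α]
    [IsFiniteMeasure μ] (h : IsCondSuccessProb μ C Z g) (hg : ∀ z, 0 ≤ g z) (hZ : Measurable Z)
    (F : Finset α) :
    μ.real (C ⁻¹' {true} ∩ Z ⁻¹' F) = ∑ z ∈ F, g z * μ.real (Z ⁻¹' {z}) := by
  rw [_root_.measureReal_inter_preimage_finset hZ]
  refine Finset.sum_congr rfl fun z _ => ?_
  rw [measureReal_def, h z, ENNReal.toReal_mul, ENNReal.toReal_ofReal (hg z), measureReal_def]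

end IsCondSuccessProb

lemma ProbabilityTheory.iIndepFun.indepFun_subtype_ne [Fintype α] [DecidableEq α]
    [MeasurableSpace β] {f : α → Ω → β} (hf : iIndepFun f μ) (hmeas : ∀ j, Measurable (f j))
    (i : α) : IndepFun (f i) (fun ω (j : {j // j ≠ i}) => f j ω) μ := by
  have h := hf.indepFun_finset {i} (Finset.univ.erase i) (by simp) hmeas
  have hφ : Measurable fun x : ({i} : Finset α) → β => x ⟨i, Finset.mem_singleton_self i⟩ :=
    measurable_pi_apply _
  have hψ : Measurable fun (x : (Finset.univ.erase i) → β) (j : {j // j ≠ i}) =>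
      x ⟨j, by simp [j.2]⟩ :=
    measurable_pi_lambda _ fun _ => measurable_pi_apply _
  exact h.comp hφ hψ

lemma ProbabilityTheory.IndepFun.measureReal_preimage_prodMk_singleton [MeasurableSpace α]
    [MeasurableSpace β] [MeasurableSingletonClass α] [MeasurableSingletonClass β]
    {X : Ω → α} {Y : Ω → β} (hXY : IndepFun X Y μ) (a : α) (b : β) :
    μ.real ((fun ω => (X ω, Y ω)) ⁻¹' {(a, b)}) = μ.real (X ⁻¹' {a}) * μ.real (Y ⁻¹' {b}) := by
  simp only [measureReal_def]
  rw [← Set.singleton_prod_singleton, Set.mk_preimage_prod,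
    hXY.measure_inter_preimage_eq_mul _ _ (measurableSet_singleton a)
      (measurableSet_singleton b), ENNReal.toReal_mul]

section BinaryCovariance

variable [IsProbabilityMeasure μ] [Fintype β] [MeasurableSpace β] [MeasurableSingletonClass β]
  {X : Ω → Bool} {Y : Ω → β} {C : Ω → Bool} {g : Bool × β → ℝ}

lemma sum_measureReal_preimage_singleton_eq_one (hY : Measurable Y) :
    ∑ t, μ.real (Y ⁻¹' {t}) = 1 := by
  rw [sum_measureReal_preimage_singleton _ fun t _ => hY (measurableSet_singleton t),
    Finset.coe_univ, Set.preimage_univ, probReal_univ]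

lemma measureReal_inter_sub_mul_eq_sum (hX : Measurable X) (hY : Measurable Y)
    (hXY : IndepFun X Y μ) (hg : ∀ z, 0 ≤ g z)
    (hCg : IsCondSuccessProb μ C (fun ω => (X ω, Y ω)) g) :
    μ.real (X ⁻¹' {true} ∩ C ⁻¹' {true})
        - μ.real (X ⁻¹' {true}) * μ.real (C ⁻¹' {true})
      = μ.real (X ⁻¹' {true}) * (1 - μ.real (X ⁻¹' {true}))
          * ∑ t, μ.real (Y ⁻¹' {t}) * (g (true, t) - g (false, t)) := by
  have hZ : Measurable fun ω => (X ω, Y ω) := hX.prodMk hY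
  have hXC : μ.real (X ⁻¹' {true} ∩ C ⁻¹' {true})
      = ∑ t, g (true, t) * μ.real ((fun ω => (X ω, Y ω)) ⁻¹' {(true, t)}) := by
    have h := hCg.measureReal_inter_preimage_finset hg hZ ({true} ×ˢ Finset.univ)
    rw [Finset.coe_product, Finset.coe_singleton, Finset.coe_univ, Set.mk_preimage_prod,
      Set.preimage_univ, Set.inter_univ, Finset.sum_product, Finset.sum_singleton] at h
    rw [Set.inter_comm, h]
  have hC : μ.real (C ⁻¹' {true})
      = ∑ t, (g (true, t) * μ.real ((fun ω => (X ω, Y ω)) ⁻¹' {(true, t)})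
          + g (false, t) * μ.real ((fun ω => (X ω, Y ω)) ⁻¹' {(false, t)})) := by
    have h := hCg.measureReal_inter_preimage_finset hg hZ Finset.univ
    rwa [Finset.coe_univ, Set.preimage_univ, Set.inter_univ, Fintype.sum_prod_type,
      Fintype.sum_bool, ← Finset.sum_add_distrib] at h
  have hfalse : μ.real (X ⁻¹' {false}) = 1 - μ.real (X ⁻¹' {true}) := by
    rw [← probReal_compl_eq_one_sub (hX (measurableSet_singleton true))]
    congr 1 with ω
    simp
  rw [hXC, hC]
  simp only [hXY.measureReal_preimage_prodMk_singleton, hfalse, Finset.mul_sum,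
    ← Finset.sum_sub_distrib]
  refine Finset.sum_congr rfl fun t _ => ?_
  ring

lemma integral_mul_sub_mul_integral_pos (hX : Measurable X) (hY : Measurable Y)
    (hXY : IndepFun X Y μ) (hp0 : 0 < μ (X ⁻¹' {true})) (hp1 : μ (X ⁻¹' {true}) < 1)
    (hg0 : ∀ z, 0 ≤ g z) (hg : ∀ t, g (false, t) < g (true, t)) (hC : Measurable C)
    (hCg : IsCondSuccessProb μ C (fun ω => (X ω, Y ω)) g) :
    0 < ∫ ω, (if X ω then (1 : ℝ) else 0) * (if C ω then (1 : ℝ) else 0) ∂μ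
      - (∫ ω, (if X ω then (1 : ℝ) else 0) ∂μ) * (∫ ω, (if C ω then (1 : ℝ) else 0) ∂μ) := by
  rw [integral_ite_one_zero_mul hX hC, integral_ite_one_zero hX, integral_ite_one_zero hC,
    measureReal_inter_sub_mul_eq_sum hX hY hXY hg0 hCg]
  have hp0' : 0 < μ.real (X ⁻¹' {true}) := ENNReal.toReal_pos hp0.ne' (measure_ne_top _ _)
  have hp1' : μ.real (X ⁻¹' {true}) < 1 :=
    ENNReal.toReal_lt_of_lt_ofReal (by rwa [ENNReal.ofReal_one])
  obtain ⟨t, -, ht⟩ : ∃ t ∈ Finset.univ, 0 < μ.real (Y ⁻¹' {t}) := by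
    refine Finset.exists_lt_of_sum_lt ?_
    simp [sum_measureReal_preimage_singleton_eq_one hY]
  have hsum : 0 < ∑ t, μ.real (Y ⁻¹' {t}) * (g (true, t) - g (false, t)) :=
    Finset.sum_pos' (fun t _ => mul_nonneg measureReal_nonneg (sub_nonneg.2 (hg t).le))
      ⟨t, Finset.mem_univ t, mul_pos ht (sub_pos.2 (hg t))⟩
  exact mul_pos (mul_pos hp0' (sub_pos.2 hp1')) hsum

end BinaryCovariance

end

theorem stmt_10_general {Ω : Type*} [MeasurableSpace Ω] (μ : Measure Ω) [IsProbabilityMeasure μ]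
    (m : ℕ) (S : Fin m → Ω → Bool) (hSmeas : ∀ j, Measurable (S j))
    (hSindep : iIndepFun S μ)
    (i : Fin m)
    (hSipos : 0 < μ {ω | S i ω = true}) (hSilt : μ {ω | S i ω = true} < 1)
    (g : (Fin m → Bool) → ℝ) (hg0 : ∀ s, 0 ≤ g s)
    (hgstrict : ∀ s : Fin m → Bool,
      g (fun j => if j = i then true else s j) > g (fun j => if j = i then false else s j))
    (C : Ω → Bool) (hCmeas : Measurable C)
    (hC : ∀ s : Fin m → Bool,
      μ ({ω | C ω = true} ∩ {ω | (fun j => S j ω) = s})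
        = ENNReal.ofReal (g s) * μ {ω | (fun j => S j ω) = s}) :
    ∫ ω, (if S i ω then (1 : ℝ) else 0) * (if C ω then (1 : ℝ) else 0) ∂μ
      - (∫ ω, (if S i ω then (1 : ℝ) else 0) ∂μ)
        * (∫ ω, (if C ω then (1 : ℝ) else 0) ∂μ) > 0 := by
  set e := Equiv.piSplitAt i fun _ => Bool
  have hsplit : ∀ b t, e.symm (b, t) = fun j => if j = i then b else e.symm (false, t) j := by
    intro b t
    funext j
    by_cases h : j = i
    · subst h
      simp [e, Equiv.piSplitAt_symm_apply]
    · simp [e, Equiv.piSplitAt_symm_apply, h]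
  have hCg : IsCondSuccessProb μ C (e ∘ fun ω j => S j ω) (g ∘ e.symm) :=
    IsCondSuccessProb.comp_equiv hC e
  refine integral_mul_sub_mul_integral_pos (Y := fun ω (j : {j // j ≠ i}) => S j ω) (hSmeas i)
    (measurable_pi_lambda _ fun j => hSmeas j) (hSindep.indepFun_subtype_ne hSmeas i)
    hSipos hSilt (fun _ => hg0 _) (fun t => ?_) hCmeas hCg
  have h := hgstrict (e.symm (false, t))
  rwa [← hsplit, ← hsplit] at h

/-- Strict-inequality refinement of Lemma 2.1: if `0 < μ(S_i = 1) < 1` and `g` is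
nondecreasing and strictly increasing in coordinate `i`, then `Cov(S_i, C) > 0`. -/
theorem stmt_10 {Ω : Type*} [MeasurableSpace Ω] (μ : Measure Ω) [IsProbabilityMeasure μ]
    (m : ℕ) (S : Fin m → Ω → Bool) (hSmeas : ∀ j, Measurable (S j))
    (hSindep : iIndepFun S μ)
    (i : Fin m)
    (hSipos : 0 < μ {ω | S i ω = true}) (hSilt : μ {ω | S i ω = true} < 1)
    (g : (Fin m → Bool) → ℝ) (hg0 : ∀ s, 0 ≤ g s) (hg1 : ∀ s, g s ≤ 1)
    (hgmono : Monotone g)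
    (hgstrict : ∀ s : Fin m → Bool,
      g (fun j => if j = i then true else s j) > g (fun j => if j = i then false else s j))
    (C : Ω → Bool) (hCmeas : Measurable C)
    (hC : ∀ s : Fin m → Bool,
      μ ({ω | C ω = true} ∩ {ω | (fun j => S j ω) = s})
        = ENNReal.ofReal (g s) * μ {ω | (fun j => S j ω) = s}) :
    ∫ ω, (if S i ω then (1 : ℝ) else 0) * (if C ω then (1 : ℝ) else 0) ∂μ
      - (∫ ω, (if S i ω then (1 : ℝ) else 0) ∂μ)
        * (∫ ω, (if C ω then (1 : ℝ) else 0) ∂μ) > 0 :=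
  stmt_10_general μ m S hSmeas hSindep i hSipos hSilt g hg0 hgstrict C hCmeas hC
end
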